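/- Let p ≥ 1, let z be a standard Gaussian vector in ℝᵖ and x = z/‖z‖. Let ΔΩ' be a symmetric p×p real matrix with spectral norm ε = ‖ΔΩ'‖₂, let α ∈ [0,1] with α·ε < 1, and let ν ≥ 1 be a natural number. Then | E[((xᵀΔΩ'x)/(xᵀ(I + αΔΩ')x))ᵛ] − E[(xᵀΔΩ'x)ᵛ] + ν·α·E[(xᵀΔΩ'x)^{ν+1}] | ≤ (ν(ν+1)α²/(2(1−αε)^{ν+2}))·E[|xᵀΔΩ'x|^{ν+2}]. -/

import Mathlib

open MeasureTheory ProbabilityTheory Matrix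

/-- The standard Gaussian measure `N(0, I_p)` on `ℝᵖ`, as the `p`-fold product of
standard normal distributions. -/
noncomputable def stdGaussian (p : ℕ) : Measure (Fin p → ℝ) :=
  Measure.pi fun _ => gaussianReal 0 1

/-- Euclidean norm of a vector in `ℝᵖ`. -/
noncomputable def euclNorm {p : ℕ} (v : Fin p → ℝ) : ℝ := Real.sqrt (v ⬝ᵥ v)

/-- Frobenius norm of a real matrix. -/
noncomputable def frobNorm {p : ℕ} (A : Matrix (Fin p) (Fin p) ℝ) : ℝ :=
  Real.sqrt (Matrix.trace (Aᵀ * A))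

/-- Spectral (L2 operator) norm of a real matrix. -/
noncomputable def specNorm {p : ℕ} (A : Matrix (Fin p) (Fin p) ℝ) : ℝ :=
  sSup {r : ℝ | ∃ v : Fin p → ℝ, euclNorm v = 1 ∧ r = euclNorm (A.mulVec v)}

/-- Minimal eigenvalue of a symmetric real matrix (via the Rayleigh quotient). -/
noncomputable def lambdaMin {p : ℕ} (A : Matrix (Fin p) (Fin p) ℝ) : ℝ :=
  sInf {r : ℝ | ∃ v : Fin p → ℝ, euclNorm v = 1 ∧ r = v ⬝ᵥ A.mulVec v}

/-- Maximal eigenvalue of a symmetric real matrix (via the Rayleigh quotient). -/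
noncomputable def lambdaMax {p : ℕ} (A : Matrix (Fin p) (Fin p) ℝ) : ℝ :=
  sSup {r : ℝ | ∃ v : Fin p → ℝ, euclNorm v = 1 ∧ r = v ⬝ᵥ A.mulVec v}

/-- Normalization of a vector to the unit sphere: `z ↦ z / ‖z‖`. -/
noncomputable def unitize {p : ℕ} (z : Fin p → ℝ) : Fin p → ℝ := (euclNorm z)⁻¹ • z

/-- `cos φ₀ = Tr Ω / (√p ‖Ω‖_F)`: the cosine of the angle between `Ω` and the identity. -/
noncomputable def cosAngleId {p : ℕ} (Ω : Matrix (Fin p) (Fin p) ℝ) : ℝ :=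
  Matrix.trace Ω / (Real.sqrt p * frobNorm Ω)

/-!
For a unit vector `x` the Rayleigh quotient `s = xᵀΔΩ'x` satisfies `|s| ≤ ε`, and the denominator
is `u = 1 + αs ≥ 1 - αε > 0`. Then `(s/u)^ν - s^ν + ναs^{ν+1} = s^ν (u^{-ν} - 1 + ν(u - 1))`, and
the bracket is the second-order Taylor remainder of `u ↦ u^{-ν}` at `1`, which lies between `0` and
`ν(ν+1)/2 · (u - 1)² / (1 - αε)^{ν+2}`; it is controlled by induction on `ν` through the
recursion `R_{ν+1} = (R_ν + (ν+1)(u-1)²)/u`. Since `(u - 1)² = α²s²`, integrating this pointwise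
bound gives the theorem.
-/

open scoped RealInnerProductSpace

noncomputable def invPowTaylorRemainder (ν : ℕ) (u : ℝ) : ℝ := (u ^ ν)⁻¹ - 1 + ν * (u - 1)

lemma invPowTaylorRemainder_succ (ν : ℕ) {u : ℝ} (hu : u ≠ 0) :
    invPowTaylorRemainder (ν + 1) u
      = (invPowTaylorRemainder ν u + (ν + 1) * (u - 1) ^ 2) / u := by
  unfold invPowTaylorRemainder
  field_simp
  push_cast
  ring

lemma invPowTaylorRemainder_nonneg (ν : ℕ) {u : ℝ} (hu : 0 < u) :
    0 ≤ invPowTaylorRemainder ν u := by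
  induction ν with
  | zero => simp [invPowTaylorRemainder]
  | succ n ih =>
    rw [invPowTaylorRemainder_succ n hu.ne']
    positivity

lemma invPowTaylorRemainder_le (ν : ℕ) {u δ : ℝ} (hδ : 0 < δ) (hδ1 : δ ≤ 1) (hu : δ ≤ u) :
    invPowTaylorRemainder ν u ≤ ν * (ν + 1) / 2 * (u - 1) ^ 2 / δ ^ (ν + 2) := by
  induction ν with
  | zero => simp [invPowTaylorRemainder]
  | succ n ih =>
    have hu0 : 0 < u := hδ.trans_le hu
    have hδpow : δ ^ (n + 2) ≤ 1 := pow_le_one₀ hδ.le hδ1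
    rw [invPowTaylorRemainder_succ n hu0.ne', div_le_iff₀ hu0]
    calc invPowTaylorRemainder n u + (n + 1) * (u - 1) ^ 2
        ≤ n * (n + 1) / 2 * (u - 1) ^ 2 / δ ^ (n + 2) + (n + 1) * (u - 1) ^ 2 / δ ^ (n + 2) := by
          gcongr
          exact le_div_self (by positivity) (by positivity) hδpow
      _ = (n + 1 : ℕ) * ((n + 1 : ℕ) + 1) / 2 * (u - 1) ^ 2 / δ ^ (n + 1 + 2) * δ := by
          field_simp
          push_cast
          ring
      _ ≤ _ := by gcongr

lemma one_sub_mul_le_one_add_mul {α ε s : ℝ} (hα : 0 ≤ α) (hs : |s| ≤ ε) :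
    1 - α * ε ≤ 1 + α * s := by
  nlinarith [neg_abs_le s]

lemma abs_div_one_add_mul_le {α ε s : ℝ} (hα : 0 ≤ α) (hαε : α * ε < 1) (hs : |s| ≤ ε) :
    |s / (1 + α * s)| ≤ ε / (1 - α * ε) := by
  have hδ : 0 < 1 - α * ε := by linarith
  have hu := one_sub_mul_le_one_add_mul hα hs
  rw [abs_div, abs_of_pos (hδ.trans_le hu)]
  exact div_le_div₀ ((abs_nonneg s).trans hs) hs hδ hu

lemma abs_div_one_add_mul_pow_taylor_le {α ε s : ℝ} (hα : 0 ≤ α) (hαε : α * ε < 1)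
    (hs : |s| ≤ ε) (ν : ℕ) :
    |(s / (1 + α * s)) ^ ν - s ^ ν + ν * α * s ^ (ν + 1)|
      ≤ ν * (ν + 1) * α ^ 2 / (2 * (1 - α * ε) ^ (ν + 2)) * |s| ^ (ν + 2) := by
  have hδ : 0 < 1 - α * ε := by linarith
  have hδ1 : 1 - α * ε ≤ 1 := by nlinarith [(abs_nonneg s).trans hs]
  have hu := one_sub_mul_le_one_add_mul hα hs
  have hu0 : 0 < 1 + α * s := hδ.trans_le hu
  have hfactor : (s / (1 + α * s)) ^ ν - s ^ ν + ν * α * s ^ (ν + 1)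
      = s ^ ν * invPowTaylorRemainder ν (1 + α * s) := by
    rw [invPowTaylorRemainder, div_pow]
    field_simp
    ring
  rw [hfactor, abs_mul, abs_pow, abs_of_nonneg (invPowTaylorRemainder_nonneg ν hu0)]
  calc |s| ^ ν * invPowTaylorRemainder ν (1 + α * s)
      ≤ |s| ^ ν * (ν * (ν + 1) / 2 * ((1 + α * s) - 1) ^ 2 / (1 - α * ε) ^ (ν + 2)) := by
        gcongr
        exact invPowTaylorRemainder_le ν hδ hδ1 hu
    _ = _ := by
        rw [add_sub_cancel_left, mul_pow, ← sq_abs s]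
        field_simp
        ring

lemma euclNorm_eq_norm {p : ℕ} (v : Fin p → ℝ) :
    euclNorm v = ‖(WithLp.toLp 2 v : EuclideanSpace ℝ (Fin p))‖ := by
  rw [norm_eq_sqrt_real_inner, EuclideanSpace.inner_toLp_toLp, star_trivial, euclNorm]

lemma euclNorm_mulVec_le {p : ℕ} (A : Matrix (Fin p) (Fin p) ℝ) (v : Fin p → ℝ) :
    euclNorm (A *ᵥ v) ≤ ‖toEuclideanCLM (𝕜 := ℝ) A‖ * euclNorm v := by
  rw [euclNorm_eq_norm, euclNorm_eq_norm, ← toEuclideanCLM_toLp]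
  exact ContinuousLinearMap.le_opNorm _ _

lemma euclNorm_mulVec_le_specNorm {p : ℕ} (A : Matrix (Fin p) (Fin p) ℝ) {v : Fin p → ℝ}
    (hv : euclNorm v = 1) : euclNorm (A *ᵥ v) ≤ specNorm A := by
  refine le_csSup ⟨‖toEuclideanCLM (𝕜 := ℝ) A‖, ?_⟩ ⟨v, hv, rfl⟩
  rintro _ ⟨w, hw, rfl⟩
  simpa [hw] using euclNorm_mulVec_le A w

lemma specNorm_nonneg {p : ℕ} (A : Matrix (Fin p) (Fin p) ℝ) : 0 ≤ specNorm A :=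
  Real.sSup_nonneg fun _ ⟨_, _, hr⟩ => hr ▸ Real.sqrt_nonneg _

lemma abs_dotProduct_mulVec_le_specNorm {p : ℕ} (A : Matrix (Fin p) (Fin p) ℝ) {v : Fin p → ℝ}
    (hv : euclNorm v = 1) : |v ⬝ᵥ A *ᵥ v| ≤ specNorm A := by
  set x : EuclideanSpace ℝ (Fin p) := WithLp.toLp 2 v
  calc |v ⬝ᵥ A *ᵥ v| = |⟪x, toEuclideanCLM (𝕜 := ℝ) A x⟫| := by rw [inner_toEuclideanCLM]
    _ ≤ euclNorm v * euclNorm (A *ᵥ v) := by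
        rw [euclNorm_eq_norm, euclNorm_eq_norm, ← toEuclideanCLM_toLp]
        exact abs_real_inner_le_norm _ _
    _ ≤ specNorm A := by
        rw [hv, one_mul]
        exact euclNorm_mulVec_le_specNorm A hv

lemma euclNorm_unitize {p : ℕ} {z : Fin p → ℝ} (hz : z ≠ 0) : euclNorm (unitize z) = 1 := by
  rw [unitize, euclNorm_eq_norm, WithLp.toLp_smul, euclNorm_eq_norm]
  exact norm_smul_inv_norm (by simpa using hz)

lemma dotProduct_unitize_self {p : ℕ} {z : Fin p → ℝ} (hz : z ≠ 0) :
    unitize z ⬝ᵥ unitize z = 1 :=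
  Real.sqrt_eq_one.mp (euclNorm_unitize hz)

lemma unitize_zero {p : ℕ} : unitize (0 : Fin p → ℝ) = 0 := by
  simp [unitize]

lemma abs_rayleigh_unitize_le {p : ℕ} (A : Matrix (Fin p) (Fin p) ℝ) (z : Fin p → ℝ) :
    |unitize z ⬝ᵥ A *ᵥ unitize z| ≤ specNorm A := by
  rcases eq_or_ne z 0 with rfl | hz
  · simpa [unitize_zero] using specNorm_nonneg A
  · exact abs_dotProduct_mulVec_le_specNorm A (euclNorm_unitize hz)

lemma rayleigh_unitize_one_add_smul {p : ℕ} (A : Matrix (Fin p) (Fin p) ℝ) (α : ℝ)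
    {z : Fin p → ℝ} (hz : z ≠ 0) :
    unitize z ⬝ᵥ (1 + α • A) *ᵥ unitize z = 1 + α * (unitize z ⬝ᵥ A *ᵥ unitize z) := by
  rw [add_mulVec, one_mulVec, smul_mulVec, dotProduct_add, dotProduct_smul,
    dotProduct_unitize_self hz, smul_eq_mul]

/-- At `z = 0` both sides are `0` (`unitize 0 = 0`), so the identity holds everywhere. -/
lemma rayleigh_div_rayleigh_one_add_smul {p : ℕ} (A : Matrix (Fin p) (Fin p) ℝ) (α : ℝ)
    (z : Fin p → ℝ) :
    (unitize z ⬝ᵥ A *ᵥ unitize z) / (unitize z ⬝ᵥ (1 + α • A) *ᵥ unitize z)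
      = (unitize z ⬝ᵥ A *ᵥ unitize z) / (1 + α * (unitize z ⬝ᵥ A *ᵥ unitize z)) := by
  rcases eq_or_ne z 0 with rfl | hz
  · simp [unitize_zero]
  · rw [rayleigh_unitize_one_add_smul A α hz]

lemma measurable_unitize {p : ℕ} : Measurable (unitize : (Fin p → ℝ) → (Fin p → ℝ)) := by
  unfold unitize euclNorm
  fun_prop

lemma measurable_rayleigh_unitize {p : ℕ} (A : Matrix (Fin p) (Fin p) ℝ) :
    Measurable fun z : Fin p → ℝ => unitize z ⬝ᵥ A *ᵥ unitize z :=
  ((continuous_id.dotProduct (continuous_const.matrix_mulVec continuous_id)).measurable).comp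
    measurable_unitize

section Moments

variable {Ω : Type*} [MeasurableSpace Ω] {μ : Measure Ω} [IsFiniteMeasure μ] {X : Ω → ℝ} {ε : ℝ}

lemma integrable_pow_of_abs_le (hX : AEMeasurable X μ) (hXε : ∀ᵐ ω ∂μ, |X ω| ≤ ε) (n : ℕ) :
    Integrable (fun ω => X ω ^ n) μ :=
  Integrable.of_bound (hX.pow_const n).aestronglyMeasurable (ε ^ n) <| hXε.mono fun _ h => by
    rw [Real.norm_eq_abs, abs_pow]
    exact pow_le_pow_left₀ (abs_nonneg _) h n

lemma abs_integral_div_one_add_mul_pow_taylor_le (hX : AEMeasurable X μ)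
    (hXε : ∀ᵐ ω ∂μ, |X ω| ≤ ε) {α : ℝ} (hα : 0 ≤ α) (hαε : α * ε < 1) (ν : ℕ) :
    |(∫ ω, (X ω / (1 + α * X ω)) ^ ν ∂μ) - (∫ ω, X ω ^ ν ∂μ)
        + ν * α * ∫ ω, X ω ^ (ν + 1) ∂μ|
      ≤ ν * (ν + 1) * α ^ 2 / (2 * (1 - α * ε) ^ (ν + 2)) * ∫ ω, |X ω| ^ (ν + 2) ∂μ := by
  have hratio : Integrable (fun ω => (X ω / (1 + α * X ω)) ^ ν) μ :=
    integrable_pow_of_abs_le (hX.div (aemeasurable_const.add (hX.const_mul α)))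
      (hXε.mono fun _ h => abs_div_one_add_mul_le hα hαε h) ν
  have hpow := integrable_pow_of_abs_le hX hXε
  have habs : Integrable (fun ω => |X ω| ^ (ν + 2)) μ := by
    simpa only [abs_pow] using (hpow (ν + 2)).abs
  have hsplit : ∫ ω, ((X ω / (1 + α * X ω)) ^ ν - X ω ^ ν + ν * α * X ω ^ (ν + 1)) ∂μ
      = (∫ ω, (X ω / (1 + α * X ω)) ^ ν ∂μ) - (∫ ω, X ω ^ ν ∂μ)
        + ν * α * ∫ ω, X ω ^ (ν + 1) ∂μ := by
    rw [integral_add (by exact hratio.sub (hpow ν)) ((hpow (ν + 1)).const_mul _),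
      integral_sub hratio (hpow ν), integral_const_mul]
  rw [← hsplit, ← integral_const_mul]
  calc _ ≤ ∫ ω, |(X ω / (1 + α * X ω)) ^ ν - X ω ^ ν + ν * α * X ω ^ (ν + 1)| ∂μ :=
        abs_integral_le_integral_abs
    _ ≤ _ := integral_mono_ae (by fun_prop) (habs.const_mul _) <|
        hXε.mono fun _ h => abs_div_one_add_mul_pow_taylor_le hα hαε h ν

end Moments

instance (p : ℕ) : IsProbabilityMeasure (stdGaussian p) := by
  unfold _root_.stdGaussian
  infer_instance

theorem ratio_moment_taylor_general (p : ℕ)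
    (ΔΩ : Matrix (Fin p) (Fin p) ℝ)
    (α : ℝ) (hα0 : 0 ≤ α) (hαε : α * specNorm ΔΩ < 1)
    (ν : ℕ) :
    |(∫ z, ((unitize z ⬝ᵥ ΔΩ.mulVec (unitize z))
          / (unitize z ⬝ᵥ (1 + α • ΔΩ).mulVec (unitize z))) ^ ν ∂(stdGaussian p))
      - (∫ z, (unitize z ⬝ᵥ ΔΩ.mulVec (unitize z)) ^ ν ∂(stdGaussian p))
      + (ν : ℝ) * α * ∫ z, (unitize z ⬝ᵥ ΔΩ.mulVec (unitize z)) ^ (ν + 1) ∂(stdGaussian p)|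
      ≤ ((ν : ℝ) * ((ν : ℝ) + 1) * α ^ 2 / (2 * (1 - α * specNorm ΔΩ) ^ (ν + 2)))
          * ∫ z, |unitize z ⬝ᵥ ΔΩ.mulVec (unitize z)| ^ (ν + 2) ∂(stdGaussian p) := by
  simp_rw [rayleigh_div_rayleigh_one_add_smul]
  exact abs_integral_div_one_add_mul_pow_taylor_le (measurable_rayleigh_unitize ΔΩ).aemeasurable
    (ae_of_all _ (abs_rayleigh_unitize_le ΔΩ)) hα0 hαε ν

/-- For `x = z/‖z‖` with `z` standard Gaussian in `ℝᵖ`, symmetric `ΔΩ'` with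
`ε = ‖ΔΩ'‖₂`, `α ∈ [0,1]` with `αε < 1`, and `ν ≥ 1`:
`|E[((xᵀΔΩ'x)/(xᵀ(I+αΔΩ')x))ᵛ] − E[(xᵀΔΩ'x)ᵛ] + να E[(xᵀΔΩ'x)^{ν+1}]|
  ≤ (ν(ν+1)α²/(2(1−αε)^{ν+2})) E[|xᵀΔΩ'x|^{ν+2}]`. -/
theorem ratio_moment_taylor (p : ℕ) (hp : 1 ≤ p)
    (ΔΩ : Matrix (Fin p) (Fin p) ℝ) (hΔ : ΔΩ.IsSymm)
    (α : ℝ) (hα0 : 0 ≤ α) (hα1 : α ≤ 1) (hαε : α * specNorm ΔΩ < 1)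
    (ν : ℕ) (hν : 1 ≤ ν) :
    |(∫ z, ((unitize z ⬝ᵥ ΔΩ.mulVec (unitize z))
          / (unitize z ⬝ᵥ (1 + α • ΔΩ).mulVec (unitize z))) ^ ν ∂(stdGaussian p))
      - (∫ z, (unitize z ⬝ᵥ ΔΩ.mulVec (unitize z)) ^ ν ∂(stdGaussian p))
      + (ν : ℝ) * α * ∫ z, (unitize z ⬝ᵥ ΔΩ.mulVec (unitize z)) ^ (ν + 1) ∂(stdGaussian p)|
      ≤ ((ν : ℝ) * ((ν : ℝ) + 1) * α ^ 2 / (2 * (1 - α * specNorm ΔΩ) ^ (ν + 2)))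
          * ∫ z, |unitize z ⬝ᵥ ΔΩ.mulVec (unitize z)| ^ (ν + 2) ∂(stdGaussian p) :=
  ratio_moment_taylor_general p ΔΩ α hα0 hαε ν
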